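/- Let V ⊆ ℂ^{n+2} be the complexification of a B-nondegenerate real subspace, α ∈ ℂ× with α ∉ {1, −1}, and L a null line such that L and ρ_V L are complementary; write p := p^V_{α,L}. Then p(0)^{-1} ∘ p(∞) = Γ^L_{ρ_V L}(−1); this automorphism maps V to itself; the subspace (L ⊕ ρ_V L)^⊥ ∩ V has codimension 1 in V and Γ^L_{ρ_V L}(−1)|_V is the reflection of V across it; and det(Γ^L_{ρ_V L}(−1)|_V) = −1. -/

import Mathlib

noncomputable section

open Module

/-- The complexification `ℂ^{n+2}` of `ℝ^{n+1,1}`. -/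
abbrev Cn (n : ℕ) := Fin (n + 2) → ℂ

/-- The complex-bilinear extension `B` of the signature `(n+1,1)` inner product on
`ℝ^{n+1,1}`. -/
def Bf (n : ℕ) (v w : Cn n) : ℂ :=
  ∑ i : Fin (n + 2), (if (i : ℕ) < n + 1 then 1 else -1) * v i * w i

lemma Bf_add_left {n : ℕ} (v v' w : Cn n) :
    Bf n (v + v') w = Bf n v w + Bf n v' w := by
  simp only [Bf, Pi.add_apply, ← Finset.sum_add_distrib]
  exact Finset.sum_congr rfl fun i _ => by ring

lemma Bf_smul_left {n : ℕ} (c : ℂ) (v w : Cn n) :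
    Bf n (c • v) w = c * Bf n v w := by
  simp only [Bf, Pi.smul_apply, smul_eq_mul, Finset.mul_sum]
  exact Finset.sum_congr rfl fun i _ => by ring

lemma Bf_zero_left {n : ℕ} (w : Cn n) : Bf n 0 w = 0 := by
  simp [Bf]

/-- Complex conjugation on `ℂ^{n+2}`, as a `conj`-semilinear automorphism;
its fixed point set is `ℝ^{n+1,1}`. -/
def conjSL (n : ℕ) : Cn n →ₛₗ[starRingEnd ℂ] Cn n where
  toFun v := fun i => starRingEnd ℂ (v i)
  map_add' a b := by funext i; simp
  map_smul' c v := by funext i; simp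

instance : RingHomSurjective (starRingEnd ℂ) :=
  ⟨fun x => ⟨starRingEnd ℂ x, by simp⟩⟩

/-- The conjugate `Ū` of a complex subspace `U` of `ℂ^{n+2}`. -/
def conjSub {n : ℕ} (U : Submodule ℂ (Cn n)) : Submodule ℂ (Cn n) :=
  U.map (conjSL n)

/-- The real points `ℝ^{n+1,1}` inside `ℂ^{n+2}`, as a real subspace. -/
def realSub (n : ℕ) : Submodule ℝ (Cn n) where
  carrier := {v | ∀ i, starRingEnd ℂ (v i) = v i}
  add_mem' := by
    intro a b ha hb i
    simp only [Pi.add_apply, map_add, ha i, hb i]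
  zero_mem' := by intro i; simp
  smul_mem' := by
    intro c v hv i
    simp only [Pi.smul_apply, Complex.real_smul, map_mul, Complex.conj_ofReal, hv i]

/-- The real points `W ∩ ℝ^{n+1,1}` of a complex subspace `W ⊆ ℂ^{n+2}`. -/
def realPoints {n : ℕ} (W : Submodule ℂ (Cn n)) : Submodule ℝ (Cn n) :=
  (W.restrictScalars ℝ) ⊓ realSub n

/-- The Gram matrix `diag(1,1,1,-1)`. -/
def gram31 (i j : Fin 4) : ℂ :=
  if i = j then (if (i : ℕ) < 3 then 1 else -1) else 0

/-- A real subspace `P` of `ℂ^{n+2}` has signature `(3,1)` if it admits a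
basis whose Gram matrix with respect to `B` is `diag(1,1,1,-1)`. -/
def hasSig31 (n : ℕ) (P : Submodule ℝ (Cn n)) : Prop :=
  ∃ b : Fin 4 → Cn n, (∀ i, b i ∈ P) ∧
    Submodule.span ℝ (Set.range b) = P ∧
    ∀ i j, Bf n (b i) (b j) = gram31 i j

/-- The orthogonal complement of a subspace with respect to `B`. -/
def perp (n : ℕ) (V : Submodule ℂ (Cn n)) : Submodule ℂ (Cn n) where
  carrier := {v | ∀ w ∈ V, Bf n v w = 0}
  add_mem' := by
    intro a b ha hb w hw
    rw [Bf_add_left, ha w hw, hb w hw, add_zero]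
  zero_mem' := by
    intro w hw
    exact Bf_zero_left w
  smul_mem' := by
    intro c v hv w hw
    rw [Bf_smul_left, hv w hw, mul_zero]

/-- `ρ` is the reflection across `V`: the identity on `V` and minus the identity
on `V^⊥`. -/
def IsReflection (n : ℕ) (V : Submodule ℂ (Cn n)) (ρ : Cn n →ₗ[ℂ] Cn n) : Prop :=
  (∀ v ∈ V, ρ v = v) ∧ (∀ v ∈ perp n V, ρ v = -v)

/-- The automorphism `Γ^{ℓ⁺}_{ℓ⁻}(λ)`, where `ℓ⁺, ℓ⁻` are the complementary null
lines spanned by `u` and `w`: it is multiplication by `λ` on `ℓ⁺`, by `λ⁻¹` on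
`ℓ⁻` and the identity on `(ℓ⁺ ⊕ ℓ⁻)^⊥`. -/
def GammaL (n : ℕ) (u w : Cn n) (lam : ℂ) : Cn n →ₗ[ℂ] Cn n where
  toFun v := v + ((lam - 1) * (Bf n v w / Bf n u w)) • u
      + ((lam⁻¹ - 1) * (Bf n v u / Bf n u w)) • w
  map_add' a b := by
    simp only [Bf_add_left]
    module
  map_smul' c v := by
    simp only [Bf_smul_left, RingHom.id_apply]
    module

/-- `λ ↦ λ* = 1/λ̄`. -/
def cstar (z : ℂ) : ℂ := (starRingEnd ℂ z)⁻¹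

/-- The linear fractional transformation appearing in the simple factor
`p^V_{α,L}`. -/
def psi (α lam : ℂ) : ℂ := (1 + α) * (lam - α) / ((1 - α) * (lam + α))

/-- The simple factor `p^V_{α,L}(λ) = Γ^L_{ρ_V L}((1+α)(λ-α)/((1-α)(λ+α)))`,
where `ρ` is the reflection across `V` and `ℓ` spans the null line `L`. -/
def pSF (n : ℕ) (ρ : Cn n →ₗ[ℂ] Cn n) (ℓ : Cn n) (α lam : ℂ) : Cn n →ₗ[ℂ] Cn n :=
  GammaL n ℓ (ρ ℓ) (psi α lam)

/-- The value `p^V_{α,L}(∞) = Γ^L_{ρ_V L}((1+α)/(1-α))`. -/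
def pSFinf (n : ℕ) (ρ : Cn n →ₗ[ℂ] Cn n) (ℓ : Cn n) (α : ℂ) : Cn n →ₗ[ℂ] Cn n :=
  GammaL n ℓ (ρ ℓ) ((1 + α) / (1 - α))

/-! Nondegeneracy of `V` splits `ℓ = a + b` with `a ∈ V`, `b ∈ V^⊥`, so `ρ ℓ = a - b`. Hence `ρ` is a
`B`-isometry (so `ρ ℓ` is null as well), `ℓ + ρ ℓ = 2a ∈ V`, and `B(v, ℓ) = B(v, ρ ℓ)` for `v ∈ V`.
On such `v` the defining formula of `Γ(-1)` collapses to the transvection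
`v ↦ v - (2 B(v, ℓ) / B(ℓ, ρ ℓ)) (ℓ + ρ ℓ)`, which fixes `H` pointwise, negates `ℓ + ρ ℓ`, and has
determinant `1 - 2 = -1`. The identity for `p(∞)` is the multiplicativity `Γ(μ) Γ(λ) = Γ(μλ)`
together with `psi α 0 = -(1 + α) / (1 - α)`. -/

section BilinearForm

variable {n : ℕ}

lemma Bf_comm (v w : Cn n) : Bf n v w = Bf n w v :=
  Finset.sum_congr rfl fun _ _ => by ring

lemma Bf_add_right (v w w' : Cn n) : Bf n v (w + w') = Bf n v w + Bf n v w' := by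
  rw [Bf_comm, Bf_add_left, Bf_comm w, Bf_comm w']

lemma Bf_smul_right (c : ℂ) (v w : Cn n) : Bf n v (c • w) = c * Bf n v w := by
  rw [Bf_comm, Bf_smul_left, Bf_comm]

lemma Bf_sub_left (v v' w : Cn n) : Bf n (v - v') w = Bf n v w - Bf n v' w := by
  rw [sub_eq_add_neg, ← neg_one_smul ℂ v', Bf_add_left, Bf_smul_left]
  ring

lemma Bf_sub_right (v w w' : Cn n) : Bf n v (w - w') = Bf n v w - Bf n v w' := by
  rw [Bf_comm, Bf_sub_left, Bf_comm w, Bf_comm w']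

variable (n) in
def Bb : LinearMap.BilinForm ℂ (Cn n) :=
  LinearMap.mk₂ ℂ (Bf n) Bf_add_left Bf_smul_left Bf_add_right Bf_smul_right

@[simp] lemma Bb_apply (v w : Cn n) : Bb n v w = Bf n v w := rfl

lemma Bb_isRefl : (Bb n).IsRefl := fun v w h => by
  rwa [Bb_apply, Bf_comm]

lemma Bb_orthogonal_eq_perp (V : Submodule ℂ (Cn n)) : (Bb n).orthogonal V = perp n V := by
  ext x
  exact forall₂_congr fun w _ => by rw [Bb_apply, Bf_comm]

lemma isCompl_perp {V : Submodule ℂ (Cn n)} (hV : ∀ v ∈ V, (∀ w ∈ V, Bf n v w = 0) → v = 0) :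
    IsCompl V (perp n V) := by
  rw [← Bb_orthogonal_eq_perp, ← (Bb n).restrict_nondegenerate_iff_isCompl_orthogonal Bb_isRefl]
  refine (LinearMap.IsRefl.nondegenerate_iff_separatingLeft (B := (Bb n).restrict V)
    fun v w => Bb_isRefl v.1 w.1).mpr fun v hv => ?_
  exact Subtype.ext (hV v v.2 fun w hw => hv ⟨w, hw⟩)

lemma mem_perp_span_pair {u w x : Cn n} :
    x ∈ perp n (Submodule.span ℂ {u} ⊔ Submodule.span ℂ {w}) ↔ Bf n x u = 0 ∧ Bf n x w = 0 := by
  refine ⟨fun hx => ⟨hx u ?_, hx w ?_⟩, fun ⟨hu, hw⟩ y hy => ?_⟩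
  · exact Submodule.mem_sup_left (Submodule.mem_span_singleton_self u)
  · exact Submodule.mem_sup_right (Submodule.mem_span_singleton_self w)
  obtain ⟨_, hy₁, _, hy₂, rfl⟩ := Submodule.mem_sup.mp hy
  obtain ⟨a, rfl⟩ := Submodule.mem_span_singleton.mp hy₁
  obtain ⟨b, rfl⟩ := Submodule.mem_span_singleton.mp hy₂
  rw [Bf_add_right, Bf_smul_right, Bf_smul_right, hu, hw]
  ring

lemma add_notMem_perp_span_pair {u w : Cn n} (hu : Bf n u u = 0) (huw : Bf n u w ≠ 0) :
    u + w ∉ perp n (Submodule.span ℂ {u} ⊔ Submodule.span ℂ {w}) := fun h => by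
  have := (mem_perp_span_pair.mp h).1
  rw [Bf_add_left, hu, zero_add, Bf_comm] at this
  exact huw this

end BilinearForm

namespace IsReflection

variable {n : ℕ} {V : Submodule ℂ (Cn n)} {ρ : Cn n →ₗ[ℂ] Cn n}

lemma apply_add (hρ : IsReflection n V ρ) {a b : Cn n} (ha : a ∈ V) (hb : b ∈ perp n V) :
    ρ (a + b) = a - b := by
  rw [map_add, hρ.1 a ha, hρ.2 b hb, sub_eq_add_neg]

lemma add_apply_mem (hρ : IsReflection n V ρ) (hV : IsCompl V (perp n V)) (x : Cn n) :
    x + ρ x ∈ V := by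
  obtain ⟨a, b, ha, hb, rfl⟩ := Submodule.codisjoint_iff_exists_add_eq.mp hV.codisjoint x
  rw [hρ.apply_add ha hb, show a + b + (a - b) = (2 : ℂ) • a by module]
  exact V.smul_mem 2 ha

lemma Bf_apply_apply (hρ : IsReflection n V ρ) (hV : IsCompl V (perp n V)) (x y : Cn n) :
    Bf n (ρ x) (ρ y) = Bf n x y := by
  obtain ⟨a, b, ha, hb, rfl⟩ := Submodule.codisjoint_iff_exists_add_eq.mp hV.codisjoint x
  obtain ⟨a', b', ha', hb', rfl⟩ := Submodule.codisjoint_iff_exists_add_eq.mp hV.codisjoint y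
  have hba' : Bf n b a' = 0 := hb a' ha'
  have hb'a : Bf n b' a = 0 := hb' a ha
  rw [hρ.apply_add ha hb, hρ.apply_add ha' hb']
  simp only [Bf_sub_left, Bf_sub_right, Bf_add_left, Bf_add_right]
  rw [Bf_comm a b']
  linear_combination (-2 : ℂ) * hba' - 2 * hb'a

lemma Bf_apply_right_of_mem (hρ : IsReflection n V ρ) (hV : IsCompl V (perp n V)) {v : Cn n}
    (hv : v ∈ V) (x : Cn n) : Bf n v (ρ x) = Bf n v x := by
  simpa only [hρ.1 v hv] using hρ.Bf_apply_apply hV v x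

end IsReflection

section GammaL

variable {n : ℕ} {u w : Cn n}

lemma GammaL_apply (lam : ℂ) (v : Cn n) :
    GammaL n u w lam v = v + ((lam - 1) * (Bf n v w / Bf n u w)) • u
      + ((lam⁻¹ - 1) * (Bf n v u / Bf n u w)) • w := rfl

lemma GammaL_one : GammaL n u w 1 = LinearMap.id := by
  ext v i
  simp [GammaL_apply]

lemma GammaL_apply_of_mem_perp {lam : ℂ} {v : Cn n}
    (hv : v ∈ perp n (Submodule.span ℂ {u} ⊔ Submodule.span ℂ {w})) : GammaL n u w lam v = v := by
  obtain ⟨hu, hw⟩ := mem_perp_span_pair.mp hv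
  simp [GammaL_apply, hu, hw]

lemma Bf_GammaL_right (hw : Bf n w w = 0) (huw : Bf n u w ≠ 0) (lam : ℂ) (v : Cn n) :
    Bf n (GammaL n u w lam v) w = lam * Bf n v w := by
  rw [GammaL_apply, Bf_add_left, Bf_add_left, Bf_smul_left, Bf_smul_left, hw]
  field_simp
  ring

lemma Bf_GammaL_left (hu : Bf n u u = 0) (huw : Bf n u w ≠ 0) (lam : ℂ) (v : Cn n) :
    Bf n (GammaL n u w lam v) u = lam⁻¹ * Bf n v u := by
  rw [GammaL_apply, Bf_add_left, Bf_add_left, Bf_smul_left, Bf_smul_left, hu, Bf_comm w u]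
  field_simp
  ring

section NullPair

variable (hu : Bf n u u = 0) (hw : Bf n w w = 0) (huw : Bf n u w ≠ 0)
include hu hw huw

lemma GammaL_comp (lam mu : ℂ) :
    (GammaL n u w mu).comp (GammaL n u w lam) = GammaL n u w (mu * lam) := by
  refine LinearMap.ext fun v => ?_
  rw [LinearMap.comp_apply, GammaL_apply mu, Bf_GammaL_right hw huw, Bf_GammaL_left hu huw,
    GammaL_apply, GammaL_apply, mul_inv]
  match_scalars <;> ring

lemma GammaL_neg_one_apply_add : GammaL n u w (-1) (u + w) = -(u + w) := by
  have hwu : Bf n w u = Bf n u w := Bf_comm w u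
  rw [GammaL_apply, Bf_add_left, Bf_add_left, hu, hw, hwu, zero_add, add_zero, div_self huw]
  module

end NullPair

lemma GammaL_neg_one_apply_of_eq {v : Cn n} (h : Bf n v u = Bf n v w) :
    GammaL n u w (-1) v = v - (2 * Bf n v u / Bf n u w) • (u + w) := by
  rw [GammaL_apply, ← h]
  module

end GammaL

lemma psi_zero {α : ℂ} (hα : α ≠ 0) : psi α 0 = -((1 + α) / (1 - α)) := by
  rw [psi, zero_sub, zero_add, mul_neg, neg_div, mul_div_mul_right _ _ hα]

lemma pSFinf_eq_pSF_zero_comp {n : ℕ} {ρ : Cn n →ₗ[ℂ] Cn n} {ℓ : Cn n} {α : ℂ} (hα : α ≠ 0)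
    (hℓ : Bf n ℓ ℓ = 0) (hρℓ : Bf n (ρ ℓ) (ρ ℓ) = 0) (hc : Bf n ℓ (ρ ℓ) ≠ 0) :
    pSFinf n ρ ℓ α = (pSF n ρ ℓ α 0).comp (GammaL n ℓ (ρ ℓ) (-1)) := by
  rw [pSF, GammaL_comp hℓ hρℓ hc, psi_zero hα, neg_mul_neg, mul_one, pSFinf]

lemma Submodule.map_eq_self_of_comp_self {R M : Type*} [Semiring R] [AddCommMonoid M] [Module R M]
    {f : M →ₗ[R] M} (hf : f.comp f = LinearMap.id) {p : Submodule R M}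
    (hp : ∀ x ∈ p, f x ∈ p) : p.map f = p := by
  refine le_antisymm (Submodule.map_le_iff_le_comap.mpr hp) fun x hx => ⟨f x, hp x hx, ?_⟩
  exact LinearMap.congr_fun hf x

section NullLine

variable {n : ℕ} {V : Submodule ℂ (Cn n)} {ρ : Cn n →ₗ[ℂ] Cn n} {ℓ : Cn n}
  (hV : IsCompl V (perp n V)) (hρ : IsReflection n V ρ) (hℓ : Bf n ℓ ℓ = 0)
  (hc : Bf n ℓ (ρ ℓ) ≠ 0)

include hV hρ

lemma GammaL_neg_one_apply_of_mem {v : Cn n} (hv : v ∈ V) :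
    GammaL n ℓ (ρ ℓ) (-1) v = v - (2 * Bf n v ℓ / Bf n ℓ (ρ ℓ)) • (ℓ + ρ ℓ) :=
  GammaL_neg_one_apply_of_eq (hρ.Bf_apply_right_of_mem hV hv ℓ).symm

lemma GammaL_neg_one_mem {v : Cn n} (hv : v ∈ V) : GammaL n ℓ (ρ ℓ) (-1) v ∈ V := by
  rw [GammaL_neg_one_apply_of_mem hV hρ hv]
  exact V.sub_mem hv (V.smul_mem _ (hρ.add_apply_mem hV ℓ))

include hℓ hc

lemma map_GammaL_neg_one : V.map (GammaL n ℓ (ρ ℓ) (-1)) = V := by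
  refine Submodule.map_eq_self_of_comp_self ?_ fun v hv => GammaL_neg_one_mem hV hρ hv
  rw [GammaL_comp hℓ ((hρ.Bf_apply_apply hV ℓ ℓ).trans hℓ) hc, neg_mul_neg, mul_one, GammaL_one]

lemma det_restrict_GammaL_neg_one (h : ∀ x ∈ V, GammaL n ℓ (ρ ℓ) (-1) x ∈ V) :
    LinearMap.det ((GammaL n ℓ (ρ ℓ) (-1)).restrict h) = -1 := by
  let φ : Module.Dual ℂ V := (-(2 / Bf n ℓ (ρ ℓ)) • Bb n ℓ).comp V.subtype
  have hφ : φ ⟨ℓ + ρ ℓ, hρ.add_apply_mem hV ℓ⟩ = -2 := by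
    simp only [φ, LinearMap.comp_apply, Submodule.subtype_apply, LinearMap.smul_apply, Bb_apply,
      Bf_add_right, hℓ, zero_add, smul_eq_mul]
    field_simp
  have hrestrict : (GammaL n ℓ (ρ ℓ) (-1)).restrict h =
      LinearMap.transvection φ ⟨ℓ + ρ ℓ, hρ.add_apply_mem hV ℓ⟩ := by
    refine LinearMap.ext fun v => Subtype.ext ?_
    rw [LinearMap.restrict_apply, LinearMap.transvection.apply]
    simp only [GammaL_neg_one_apply_of_mem hV hρ v.2, φ, LinearMap.comp_apply,
      Submodule.subtype_apply, LinearMap.smul_apply, Bb_apply, Submodule.coe_add,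
      Submodule.coe_smul, Bf_comm ℓ]
    module
  rw [hrestrict, LinearMap.transvection.det, hφ]
  norm_num

lemma perp_span_pair_inf_sup_span_add_apply :
    perp n (Submodule.span ℂ {ℓ} ⊔ Submodule.span ℂ {ρ ℓ}) ⊓ V ⊔ Submodule.span ℂ {ℓ + ρ ℓ}
      = V := by
  have hy := hρ.add_apply_mem hV ℓ
  refine le_antisymm (sup_le inf_le_right (Submodule.span_singleton_le_iff_mem _ _ |>.mpr hy))
    fun v hv => ?_
  set c := Bf n v ℓ / Bf n ℓ (ρ ℓ)
  have hvc : v - c • (ℓ + ρ ℓ) ∈ V := V.sub_mem hv (V.smul_mem c hy)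
  have hvcℓ : Bf n (v - c • (ℓ + ρ ℓ)) ℓ = 0 := by
    rw [Bf_sub_left, Bf_smul_left, Bf_add_left, hℓ, zero_add, Bf_comm (ρ ℓ), div_mul_cancel₀ _ hc,
      sub_self]
  have hvcρℓ : Bf n (v - c • (ℓ + ρ ℓ)) (ρ ℓ) = 0 := by
    rw [hρ.Bf_apply_right_of_mem hV hvc, hvcℓ]
  refine Submodule.mem_sup.mpr ⟨_, ⟨mem_perp_span_pair.mpr ⟨hvcℓ, hvcρℓ⟩, hvc⟩, c • (ℓ + ρ ℓ),
    Submodule.smul_mem _ c (Submodule.mem_span_singleton_self _), sub_add_cancel v _⟩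

end NullLine

theorem statement5_general (n : ℕ) (V : Submodule ℂ (Cn n))
    (hVnd : ∀ v ∈ V, (∀ w ∈ V, Bf n v w = 0) → v = 0)
    (ρ : Cn n →ₗ[ℂ] Cn n) (hρ : IsReflection n V ρ)
    (α : ℂ) (hα : α ≠ 0)
    (ℓ : Cn n) (hℓnull : Bf n ℓ ℓ = 0)
    (hℓcompl : Bf n ℓ (ρ ℓ) ≠ 0)
    (H : Submodule ℂ (Cn n))
    (hH : H = perp n (Submodule.span ℂ {ℓ} ⊔ Submodule.span ℂ {ρ ℓ}) ⊓ V) :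
    -- `p(0)⁻¹ ∘ p(∞) = Γ^L_{ρ_V L}(-1)`, stated as `p(∞) = p(0) ∘ Γ^L_{ρ_V L}(-1)`
    pSFinf n ρ ℓ α = (pSF n ρ ℓ α 0).comp (GammaL n ℓ (ρ ℓ) (-1)) ∧
    -- `Γ^L_{ρ_V L}(-1)` maps `V` to itself
    Submodule.map (GammaL n ℓ (ρ ℓ) (-1)) V = V ∧
    -- `H` has codimension 1 in `V`
    Module.finrank ℂ V = Module.finrank ℂ H + 1 ∧
    -- `Γ^L_{ρ_V L}(-1)|_V` is the reflection of `V` across `H`: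
    (∀ x ∈ H, GammaL n ℓ (ρ ℓ) (-1) x = x) ∧
    (ℓ + ρ ℓ ∈ V ∧ GammaL n ℓ (ρ ℓ) (-1) (ℓ + ρ ℓ) = -(ℓ + ρ ℓ) ∧
      H ⊔ Submodule.span ℂ {ℓ + ρ ℓ} = V) ∧
    -- the determinant of the restriction to `V` is `-1`
    ∀ h : ∀ x ∈ V, GammaL n ℓ (ρ ℓ) (-1) x ∈ V,
      LinearMap.det ((GammaL n ℓ (ρ ℓ) (-1)).restrict h) = -1 := by
  have hV : IsCompl V (perp n V) := isCompl_perp hVnd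
  have hρℓ : Bf n (ρ ℓ) (ρ ℓ) = 0 := (hρ.Bf_apply_apply hV ℓ ℓ).trans hℓnull
  have hHV : H ⊔ Submodule.span ℂ {ℓ + ρ ℓ} = V :=
    hH ▸ perp_span_pair_inf_sup_span_add_apply hV hρ hℓnull hℓcompl
  have hyH : ℓ + ρ ℓ ∉ H := hH ▸ fun h => add_notMem_perp_span_pair hℓnull hℓcompl h.1
  refine ⟨pSFinf_eq_pSF_zero_comp hα hℓnull hρℓ hℓcompl, map_GammaL_neg_one hV hρ hℓnull hℓcompl,
    ?_, fun x hx => GammaL_apply_of_mem_perp (hH ▸ hx).1,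
    ⟨hρ.add_apply_mem hV ℓ, GammaL_neg_one_apply_add hℓnull hρℓ hℓcompl, hHV⟩,
    det_restrict_GammaL_neg_one hV hρ hℓnull hℓcompl⟩
  rw [← hHV, Submodule.finrank_sup_span_singleton hyH]

/-- Let `V` be the complexification of a `B`-nondegenerate real
subspace (with reflection `ρ = ρ_V`), `α ∈ ℂ^× ∖ {1, -1}`, and `L = ⟨ℓ⟩` a null line
with `L, ρ_V L` complementary; write `p = p^V_{α,L}`.  Then
`p(0)⁻¹ ∘ p(∞) = Γ^L_{ρ_V L}(-1)`; this automorphism maps `V` to itself;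
`H := (L ⊕ ρ_V L)^⊥ ∩ V` has codimension 1 in `V` and `Γ^L_{ρ_V L}(-1)|_V` is the
reflection of `V` across `H`; and `det (Γ^L_{ρ_V L}(-1)|_V) = -1`. -/
theorem statement5 (n : ℕ) (V : Submodule ℂ (Cn n))
    (hVconj : conjSub V = V)
    (hVnd : ∀ v ∈ V, (∀ w ∈ V, Bf n v w = 0) → v = 0)
    (ρ : Cn n →ₗ[ℂ] Cn n) (hρ : IsReflection n V ρ)
    (α : ℂ) (hα : α ≠ 0) (hα1 : α ≠ 1) (hα1' : α ≠ -1)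
    (ℓ : Cn n) (hℓ : ℓ ≠ 0) (hℓnull : Bf n ℓ ℓ = 0)
    (hℓcompl : Bf n ℓ (ρ ℓ) ≠ 0)
    (H : Submodule ℂ (Cn n))
    (hH : H = perp n (Submodule.span ℂ {ℓ} ⊔ Submodule.span ℂ {ρ ℓ}) ⊓ V) :
    -- `p(0)⁻¹ ∘ p(∞) = Γ^L_{ρ_V L}(-1)`, stated as `p(∞) = p(0) ∘ Γ^L_{ρ_V L}(-1)`
    pSFinf n ρ ℓ α = (pSF n ρ ℓ α 0).comp (GammaL n ℓ (ρ ℓ) (-1)) ∧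
    -- `Γ^L_{ρ_V L}(-1)` maps `V` to itself
    Submodule.map (GammaL n ℓ (ρ ℓ) (-1)) V = V ∧
    -- `H` has codimension 1 in `V`
    Module.finrank ℂ V = Module.finrank ℂ H + 1 ∧
    -- `Γ^L_{ρ_V L}(-1)|_V` is the reflection of `V` across `H`:
    (∀ x ∈ H, GammaL n ℓ (ρ ℓ) (-1) x = x) ∧
    (ℓ + ρ ℓ ∈ V ∧ GammaL n ℓ (ρ ℓ) (-1) (ℓ + ρ ℓ) = -(ℓ + ρ ℓ) ∧
      H ⊔ Submodule.span ℂ {ℓ + ρ ℓ} = V) ∧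
    -- the determinant of the restriction to `V` is `-1`
    ∀ h : ∀ x ∈ V, GammaL n ℓ (ρ ℓ) (-1) x ∈ V,
      LinearMap.det ((GammaL n ℓ (ρ ℓ) (-1)).restrict h) = -1 :=
  statement5_general n V hVnd ρ hρ α hα ℓ hℓnull hℓcompl H hH
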